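/- arXiv:1008.1976 — 4 statements merged into one kernel-verified Lean document; each statement's English description precedes it below -/
import Mathlib

section
/- Let M and M' be two 𝒮-towers and let g_0 : N_0 → N'_0 be a morphism. Suppose (h_i : M_i → M'_i)_{i≥0} and (g_i : N_i → N'_i)_{i≥1} are morphisms such that for all i ≥ 0 the squares h_i ∘ f_{i+1} = f'_{i+1} ∘ h_{i+1}, g_i ∘ ε_i = ε'_i ∘ h_i, and the squares with the connecting morphisms N_i → M_{i+1}[1] commute. Then the morphisms g_i for i ≥ 1 are uniquely determined by g_0: if (h'_i, g'_i) is another such family with the same g_0, then g'_i = g_i for all i ≥ 1. -/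
/-!
The differences `d i = h i - h' i`, `e i = g i - g' i` again make the ladder commute, so it
suffices that `e n = 0` forces `e (n + 1) = 0`. The `δ`-square then gives
`δ n ≫ (d (n + 1))⟦1⟧ = 0`, so by exactness `d (n + 1)` factors through `f n`. Since every map
`M n ⟶ X` with `X ∈ add 𝒮` factors through `ε n` and `f n ≫ ε n = 0`, the map `f n` is a ghost
for `add 𝒮`; hence `ε (n + 1) ≫ e (n + 1) = d (n + 1) ≫ ε' (n + 1)` vanishes, and injectivity of
`ε (n + 1) ≫ -` on maps into `add 𝒮` gives `e (n + 1) = 0`.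
-/

open CategoryTheory CategoryTheory.Limits CategoryTheory.Pretriangulated

universe v u

section TowerDefs

variable (C : Type u) [Category.{v} C] [HasZeroObject C] [HasShift C ℤ] [Preadditive C]
  [∀ n : ℤ, (shiftFunctor C n).Additive] [Pretriangulated C]

/-- Objects isomorphic to finite direct sums of objects of `S` (direct sums encoded by
binary biproduct data). -/
inductive MemAddS (S : Set C) : C → Prop
  | of {X Y : C} (hX : X ∈ S) (e : Y ≅ X) : MemAddS S Y
  | zero {X : C} (hX : IsZero X) : MemAddS S X
  | sum {X Y Z : C} (i₁ : X ⟶ Z) (i₂ : Y ⟶ Z) (p₁ : Z ⟶ X) (p₂ : Z ⟶ Y)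
      (h₁ : i₁ ≫ p₁ = 𝟙 X) (h₂ : i₂ ≫ p₂ = 𝟙 Y) (h₁₂ : i₁ ≫ p₂ = 0) (h₂₁ : i₂ ≫ p₁ = 0)
      (hid : p₁ ≫ i₁ + p₂ ≫ i₂ = 𝟙 Z)
      (hX : MemAddS S X) (hY : MemAddS S Y) : MemAddS S Z

/-- An `𝒮`-tower: a diagram `⋯ → M_2 → M_1 → M_0 → N_0` as in §3.1 of the paper, with
`M_i = 0` for `i ≫ 0`, where `N i` is the cone of `f i : M (i+1) ⟶ M i` (so `N 0` is the
third vertex of a distinguished triangle on `f 0`, and `ε i : M i ⟶ N i` is the canonical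
map), each `N i` lies in `add 𝒮`, the map `Hom(N 0, X) → Hom(M 0, X)` is surjective for
`X ∈ 𝒮`, and `Hom(N i, X) → Hom(M i, X)` is bijective for `X ∈ 𝒮` and `i ≥ 1`. -/
structure STower (S : Set C) where
  M : ℕ → C
  f : ∀ i, M (i + 1) ⟶ M i
  N : ℕ → C
  ε : ∀ i, M i ⟶ N i
  δ : ∀ i, N i ⟶ (M (i + 1))⟦(1 : ℤ)⟧
  bound : ∃ r, ∀ i, r ≤ i → IsZero (M i)
  tri : ∀ i, Triangle.mk (f i) (ε i) (δ i) ∈ distTriang C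
  mem_addS : ∀ i, MemAddS C S (N i)
  surj : ∀ X ∈ S, Function.Surjective fun g : N 0 ⟶ X => ε 0 ≫ g
  bij : ∀ i, 1 ≤ i → ∀ X ∈ S, Function.Bijective fun g : N i ⟶ X => ε i ≫ g

end TowerDefs

namespace MemAddS

variable {C : Type u} [Category.{v} C] [Preadditive C] {S : Set C} {M A : C} (ε : M ⟶ A)

lemma exists_eq_comp (hε : ∀ X ∈ S, Function.Surjective fun g : A ⟶ X => ε ≫ g)
    {X : C} (hX : MemAddS C S X) (φ : M ⟶ X) : ∃ g : A ⟶ X, φ = ε ≫ g := by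
  induction hX with
  | of hX e =>
    obtain ⟨g, hg : ε ≫ g = φ ≫ e.hom⟩ := hε _ hX (φ ≫ e.hom)
    exact ⟨g ≫ e.inv, by simp [reassoc_of% hg]⟩
  | zero hX => exact ⟨0, hX.eq_of_tgt _ _⟩
  | sum i₁ i₂ p₁ p₂ _ _ _ _ hid _ _ ihX ihY =>
    obtain ⟨u, hu⟩ := ihX (φ ≫ p₁)
    obtain ⟨v, hv⟩ := ihY (φ ≫ p₂)
    refine ⟨u ≫ i₁ + v ≫ i₂, ?_⟩
    calc φ = φ ≫ (p₁ ≫ i₁ + p₂ ≫ i₂) := by rw [hid, Category.comp_id]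
      _ = ε ≫ (u ≫ i₁ + v ≫ i₂) := by simp [reassoc_of% hu, reassoc_of% hv]

lemma eq_zero_of_comp_eq_zero (hε : ∀ X ∈ S, Function.Injective fun g : A ⟶ X => ε ≫ g)
    {X : C} (hX : MemAddS C S X) (a : A ⟶ X) (ha : ε ≫ a = 0) : a = 0 := by
  induction hX with
  | of hX e =>
    have : a ≫ e.hom = 0 := hε _ hX (by simp [reassoc_of% ha])
    simpa using this =≫ e.inv
  | zero hX => exact hX.eq_of_tgt _ _
  | sum i₁ i₂ p₁ p₂ _ _ _ _ hid _ _ ihX ihY =>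
    have hp₁ : a ≫ p₁ = 0 := ihX _ (by simp [reassoc_of% ha])
    have hp₂ : a ≫ p₂ = 0 := ihY _ (by simp [reassoc_of% ha])
    calc a = a ≫ (p₁ ≫ i₁ + p₂ ≫ i₂) := by rw [hid, Category.comp_id]
      _ = 0 := by simp [reassoc_of% hp₁, reassoc_of% hp₂]

end MemAddS

section Triangulated

-- Qualified because inside the namespace `Triangle`, `shiftFunctor` means `Triangle.shiftFunctor`.
variable {C : Type u} [Category.{v} C] [HasZeroObject C] [HasShift C ℤ] [Preadditive C]
  [∀ n : ℤ, (CategoryTheory.shiftFunctor C n).Additive] [Pretriangulated C]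

lemma CategoryTheory.Pretriangulated.Triangle.yoneda_exact₁ {T : Triangle C}
    (hT : T ∈ distTriang C) {X : C} (f : T.obj₁ ⟶ X) (hf : T.mor₃ ≫ f⟦(1 : ℤ)⟧' = 0) :
    ∃ g : T.obj₂ ⟶ X, f = T.mor₁ ≫ g := by
  obtain ⟨w : T.obj₂⟦(1 : ℤ)⟧ ⟶ X⟦(1 : ℤ)⟧, hw⟩ :=
    Triangle.yoneda_exact₂ _ (rot_of_distTriang _ (rot_of_distTriang _ hT)) (f⟦(1 : ℤ)⟧') hf
  refine ⟨-(CategoryTheory.shiftFunctor C (1 : ℤ)).preimage w,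
    (CategoryTheory.shiftFunctor C (1 : ℤ)).map_injective ?_⟩
  rw [Functor.map_comp, Functor.map_neg, Functor.map_preimage, Preadditive.comp_neg,
    ← Preadditive.neg_comp]
  exact hw

namespace STower

variable {S : Set C} (T : STower C S)

lemma exists_eq_ε_comp (i : ℕ) {X : C} (hX : MemAddS C S X) (φ : T.M i ⟶ X) :
    ∃ g : T.N i ⟶ X, φ = T.ε i ≫ g := by
  refine MemAddS.exists_eq_comp (T.ε i) ?_ hX φ
  cases i with
  | zero => exact T.surj
  | succ n => exact fun X hX => (T.bij (n + 1) n.succ_pos X hX).2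

lemma eq_zero_of_ε_comp_eq_zero {i : ℕ} (hi : 1 ≤ i) {X : C} (hX : MemAddS C S X)
    (a : T.N i ⟶ X) (ha : T.ε i ≫ a = 0) : a = 0 :=
  MemAddS.eq_zero_of_comp_eq_zero (T.ε i) (fun X hX => (T.bij i hi X hX).1) hX a ha

lemma f_comp_eq_zero (i : ℕ) {X : C} (hX : MemAddS C S X) (φ : T.M i ⟶ X) :
    T.f i ≫ φ = 0 := by
  obtain ⟨g, rfl⟩ := T.exists_eq_ε_comp i hX φ
  have hfε : T.f i ≫ T.ε i = 0 := comp_distTriang_mor_zero₁₂ _ (T.tri i)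
  rw [reassoc_of% hfε, zero_comp]

lemma comp_ε_eq_zero (T' : STower C S) (n : ℕ) (d : T.M (n + 1) ⟶ T'.M (n + 1))
    (hd : T.δ n ≫ d⟦(1 : ℤ)⟧' = 0) : d ≫ T'.ε (n + 1) = 0 := by
  obtain ⟨w : T.M n ⟶ T'.M (n + 1), hw : d = T.f n ≫ w⟩ :=
    Triangle.yoneda_exact₁ (T.tri n) d hd
  rw [hw, Category.assoc]
  exact T.f_comp_eq_zero n (T'.mem_addS (n + 1)) (w ≫ T'.ε (n + 1))

end STower

end Triangulated

/-- Given two `𝒮`-towers `T`, `T'`, a morphism `g₀ : N₀ ⟶ N'₀`, and two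
families `(h, g)`, `(h', g')` of morphisms making all squares of the ladder diagram
commute and agreeing in degree `0`, the components `g i` for `i ≥ 1` coincide: they are
uniquely determined by `g 0`. -/
theorem stmt_3 {C : Type u} [Category.{v} C] [HasZeroObject C] [HasShift C ℤ]
    [Preadditive C] [∀ n : ℤ, (shiftFunctor C n).Additive] [Pretriangulated C]
    (S : Set C) (T T' : STower C S)
    (h h' : ∀ i, T.M i ⟶ T'.M i) (g g' : ∀ i, T.N i ⟶ T'.N i)
    (hsq : ∀ i, T.f i ≫ h i = h (i + 1) ≫ T'.f i)
    (hε : ∀ i, h i ≫ T'.ε i = T.ε i ≫ g i)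
    (hδ : ∀ i, g i ≫ T'.δ i = T.δ i ≫ (h (i + 1))⟦(1 : ℤ)⟧')
    (hsq' : ∀ i, T.f i ≫ h' i = h' (i + 1) ≫ T'.f i)
    (hε' : ∀ i, h' i ≫ T'.ε i = T.ε i ≫ g' i)
    (hδ' : ∀ i, g' i ≫ T'.δ i = T.δ i ≫ (h' (i + 1))⟦(1 : ℤ)⟧')
    (h0 : g 0 = g' 0) :
    ∀ i, 1 ≤ i → g i = g' i := by
  have hdiff : ∀ i, g i - g' i = 0 := by
    intro i
    induction i with
    | zero => rw [h0, sub_self]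
    | succ n ih =>
      have hδd : T.δ n ≫ (h (n + 1) - h' (n + 1))⟦(1 : ℤ)⟧' = 0 := by
        rw [Functor.map_sub, Preadditive.comp_sub, ← hδ, ← hδ', ← Preadditive.sub_comp, ih,
          zero_comp]
      refine T.eq_zero_of_ε_comp_eq_zero n.succ_pos (T'.mem_addS _) _ ?_
      rw [Preadditive.comp_sub, ← hε, ← hε', ← Preadditive.sub_comp]
      exact T.comp_ε_eq_zero T' n _ hδd
  exact fun i _ => sub_eq_zero.mp (hdiff i)
end

section
/- Assume in addition that Hom(S, T[n]) = 0 for all S, T ∈ 𝒮 and all n < 0. Then for every 𝒮-tower M, the canonical map Hom(N_0, S) → Hom(M_0, S) given by precomposition with ε_0 is bijective for all S ∈ 𝒮. -/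
/-!
By the exact `Hom(-, X)` sequence of the triangle `M₁ → M₀ → N₀ → M₁⟦1⟧`, the kernel of
`ε₀ ≫ -` on `Hom(N₀, X)` is the image of `Hom(M₁⟦1⟧, X) ≅ Hom(M₁, X⟦-1⟧)`. This group
vanishes: maps from `add 𝒮` to `X⟦-1⟧` vanish by the hypothesis on negative shifts, and each
`M_i` is built from the `N_j` with `j ≥ i` by the triangles of the tower, starting from
`M_i = 0` for `i` large.
-/

open CategoryTheory CategoryTheory.Limits CategoryTheory.Pretriangulated

universe v u

theorem MemAddS.eq_zero_of_forall_mem {C : Type u} [Category.{v} C] [Preadditive C]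
    {S : Set C} {Y : C} (hS : ∀ X ∈ S, ∀ g : X ⟶ Y, g = 0) {Z : C} (hZ : MemAddS C S Z)
    (g : Z ⟶ Y) : g = 0 := by
  induction hZ with
  | of hX e =>
    rw [← e.hom_inv_id_assoc g, hS _ hX (e.inv ≫ g), comp_zero]
  | zero hZ => exact hZ.eq_of_src g 0
  | sum i₁ i₂ p₁ p₂ _ _ _ _ hid _ _ ih₁ ih₂ =>
    rw [← Category.id_comp g, ← hid, Preadditive.add_comp, Category.assoc, Category.assoc,
      ih₁ (i₁ ≫ g), ih₂ (i₂ ≫ g), comp_zero, comp_zero, add_zero]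

theorem eq_zero_of_shift_one_src {C : Type u} [Category.{v} C] [Preadditive C] [HasShift C ℤ]
    [(shiftFunctor C (1 : ℤ)).Additive] {A X : C} (h : ∀ g : A ⟶ X⟦(-1 : ℤ)⟧, g = 0)
    (g : A⟦(1 : ℤ)⟧ ⟶ X) : g = 0 :=
  -- `(shiftEquiv C 1).functor` is `shiftFunctor C 1` only up to unfolding `shiftEquiv'`
  have : (shiftEquiv C (1 : ℤ)).functor.Additive :=
    inferInstanceAs (shiftFunctor C (1 : ℤ)).Additive
  let adj := (shiftEquiv C (1 : ℤ)).toAdjunction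
  (adj.homEquiv _ _).injective ((h _).trans (adj.homAddEquiv_zero _ _).symm)

section Pretriangulated

variable {C : Type u} [Category.{v} C] [HasZeroObject C] [HasShift C ℤ] [Preadditive C]
  [∀ n : ℤ, (shiftFunctor C n).Additive] [Pretriangulated C]

theorem STower.eq_zero_of_forall_N {S : Set C} (T : STower C S) {Y : C}
    (hN : ∀ i, ∀ g : T.N i ⟶ Y, g = 0) (i : ℕ) (g : T.M i ⟶ Y) : g = 0 := by
  obtain ⟨r, hr⟩ := T.bound
  suffices h : ∀ d i, r ≤ i + d → ∀ g : T.M i ⟶ Y, g = 0 from h r i (by omega) g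
  intro d
  induction d with
  | zero => exact fun i hi g => (hr i (by omega)).eq_of_src g 0
  | succ d ih =>
    intro i hi g
    obtain ⟨h, hh⟩ :=
      Triangle.yoneda_exact₂ _ (T.tri i) g (ih (i + 1) (by omega) (T.f i ≫ g))
    exact hh.trans ((congrArg (T.ε i ≫ ·) (hN i h)).trans comp_zero)

theorem Triangle.mor₂_comp_injective {T : Triangle C} (hT : T ∈ distTriang C) {X : C}
    (h₁ : ∀ g : T.obj₁⟦(1 : ℤ)⟧ ⟶ X, g = 0) :
    Function.Injective fun g : T.obj₃ ⟶ X => T.mor₂ ≫ g := by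
  intro g₁ g₂ hg
  rw [← sub_eq_zero]
  obtain ⟨h, hh⟩ := Triangle.yoneda_exact₃ _ hT (g₁ - g₂) (by
    rw [Preadditive.comp_sub, sub_eq_zero]; exact hg)
  exact hh.trans ((congrArg (T.mor₃ ≫ ·) (h₁ h)).trans comp_zero)

end Pretriangulated

/-- If moreover `Hom(X, Y⟦n⟧) = 0` for all `X, Y ∈ 𝒮` and `n < 0`, then
for every `𝒮`-tower the canonical map `Hom(N₀, X) → Hom(M₀, X)` (precomposition with
`ε₀`) is bijective for all `X ∈ 𝒮`. -/
theorem stmt_4 {C : Type u} [Category.{v} C] [HasZeroObject C] [HasShift C ℤ]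
    [Preadditive C] [∀ n : ℤ, (shiftFunctor C n).Additive] [Pretriangulated C]
    (S : Set C)
    (hneg : ∀ X ∈ S, ∀ Y ∈ S, ∀ n : ℤ, n < 0 → ∀ f : X ⟶ Y⟦n⟧, f = 0)
    (T : STower C S) (X : C) (hX : X ∈ S) :
    Function.Bijective fun g : T.N 0 ⟶ X => T.ε 0 ≫ g := by
  have hN : ∀ i, ∀ g : T.N i ⟶ X⟦(-1 : ℤ)⟧, g = 0 := fun i =>
    (T.mem_addS i).eq_zero_of_forall_mem fun Y hY => hneg Y hY X hX (-1) (by norm_num)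
  exact ⟨Triangle.mor₂_comp_injective (T.tri 0)
    (eq_zero_of_shift_one_src (T.eq_zero_of_forall_N hN 1)),
    T.surj X hX⟩
end

section
/- Let f, f' : M → N be two surjective homomorphisms of A-modules with f ∼ f' (i.e., f − f' is a projective map). Then there exists an automorphism σ of M with f' = f ∘ σ and σ ∼ id_M. Similarly, if f, f' : N → M are two injective homomorphisms with f ∼ f', then there exists an automorphism σ of M with f' = σ ∘ f and σ ∼ id_M. -/
noncomputable section

section Defs

variable (k A : Type) [Field k] [Ring A] [Algebra k A]

/-- The `A`-linear endomorphism of an `A`-module given by the action of the central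
element `algebraMap k A c`, i.e. "`c • id`". -/
def algSmul {M : Type} [AddCommGroup M] [Module A M] (c : k) : M →ₗ[A] M where
  toFun x := algebraMap k A c • x
  map_add' x y := smul_add _ x y
  map_smul' a x := by
    simp only [RingHom.id_apply, smul_smul]
    rw [Algebra.commutes c a]

/-- A homomorphism of `A`-modules is *projective* if it factors through a projective
`A`-module. -/
def IsProjMap {M N : Type} [AddCommGroup M] [Module A M] [AddCommGroup N] [Module A N]
    (f : M →ₗ[A] N) : Prop :=
  ∃ P : ModuleCat.{0} A, Module.Projective A P ∧
    ∃ (g : M →ₗ[A] P) (h : (P : Type) →ₗ[A] N), f = h.comp g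

/-- `A` is split: the endomorphism ring of every simple `A`-module is `k`. -/
def IsSplitAlgebra : Prop :=
  ∀ (V : Type) [AddCommGroup V] [Module A V], IsSimpleModule A V →
    ∀ f : V →ₗ[A] V, ∃ c : k, f = algSmul k A c

/-- `A` has no projective simple module. -/
def NoProjectiveSimple : Prop :=
  ∀ (V : Type) [AddCommGroup V] [Module A V], IsSimpleModule A V →
    ¬ Module.Projective A V

/-- An indecomposable module: nonzero, and with no nontrivial direct sum decomposition. -/
def IsIndecModule (M : Type) [AddCommGroup M] [Module A M] : Prop :=
  Nontrivial M ∧ ∀ N P : Submodule A M, IsCompl N P → N = ⊥ ∨ P = ⊥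

variable {ι : Type} (S : ι → Type) [∀ i, AddCommGroup (S i)] [∀ i, Module A (S i)]

/-- `X ∈ add 𝒮` : `X` is isomorphic to a finite direct sum of members of `𝒮`. -/
def InAddS (X : Type) [AddCommGroup X] [Module A X] : Prop :=
  ∃ (n : ℕ) (c : Fin n → ι), Nonempty (X ≃ₗ[A] ((j : Fin n) → S (c j)))

/-- `M` is filtrable: it has a finite filtration with successive quotients in `add 𝒮`. -/
def IsFiltrable (M : Type) [AddCommGroup M] [Module A M] : Prop :=
  ∃ (r : ℕ) (F : ℕ → Submodule A M),
    F 0 = ⊤ ∧ F r = ⊥ ∧ (∀ i, F (i + 1) ≤ F i) ∧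
    ∀ i < r, InAddS A S (↥(F i) ⧸ (F (i + 1)).comap (F i).subtype)

/-- `M` has no projective remainder: no decomposition `M = N ⊕ P` with `P` nonzero
projective and `N` filtrable. -/
def NoProjRemainder (M : Type) [AddCommGroup M] [Module A M] : Prop :=
  ¬ ∃ N P : Submodule A M, IsCompl N P ∧ Module.Projective A P ∧ P ≠ ⊥ ∧
      IsFiltrable A S ↥N

/-- The standing hypotheses on the finite set `𝒮`: its members are finitely generated
indecomposable modules with `Hom_{A-stab}(S,T) = k^{δ_{S,T}}`. -/
def SGood : Prop :=
  (∀ i, IsIndecModule A (S i)) ∧ (∀ i, Module.Finite A (S i)) ∧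
  (∀ i j, i ≠ j → ∀ f : S i →ₗ[A] S j, IsProjMap A f) ∧
  ∀ i, ∀ f : S i →ₗ[A] S i, ∃! c : k, IsProjMap A (f - algSmul k A c)

/-- Stable isomorphism of modules : `M ⊕ P ≅ N ⊕ Q` with `P`, `Q` projective. -/
def StablyIso (M N : Type) [AddCommGroup M] [Module A M] [AddCommGroup N] [Module A N] : Prop :=
  ∃ P Q : ModuleCat.{0} A, Module.Projective A P ∧ Module.Projective A Q ∧
    Nonempty ((M × P) ≃ₗ[A] (N × Q))

end Defs

/-!
Lifting the factorisation of `f - f'` along the surjection `f` (resp. extending it along the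
injection `f` through a finite free module, which is injective as `A` is self-injective) gives a
projective `τ` with `f' = f ∘ (1 - τ)` (resp. `f' = (1 - τ) ∘ f`). It remains to replace
`σ = 1 - τ` by a bijective endomorphism with the same property.

Fitting's lemma splits `M = K ⊕ I` with `σ` nilpotent on `K` and bijective on `I`. On `K` the map
`σ - 1` is invertible, so `1_K` is projective, i.e. `K` is projective (hence also injective). If
`K ≠ 0`, the lifting (resp. extension) property of `K` yields a correction of `σ` through `K`,
with values in `ker f` (resp. vanishing on `range f`), that keeps `f ∘ σ` (resp. `σ ∘ f`) and makes
`σ` non-nilpotent on `K`. This strictly enlarges the Fitting image (resp. shrinks the Fitting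
kernel), so by finite length the process ends at an automorphism.
-/

open Submodule LinearMap

section ProjectiveMaps

variable {A : Type} [Ring A] {M N L : Type} [AddCommGroup M] [Module A M]
  [AddCommGroup N] [Module A N] [AddCommGroup L] [Module A L]

theorem isProjMap_comp {P : Type} [AddCommGroup P] [Module A P] [Module.Projective A P]
    (g : M →ₗ[A] P) (h : P →ₗ[A] N) : IsProjMap A (h ∘ₗ g) :=
  ⟨ModuleCat.of A P, ‹_›, g, h, rfl⟩

namespace IsProjMap

theorem add {φ ψ : M →ₗ[A] N} (hφ : IsProjMap A φ) (hψ : IsProjMap A ψ) :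
    IsProjMap A (φ + ψ) := by
  obtain ⟨P, _, g, h, rfl⟩ := hφ
  obtain ⟨Q, _, g', h', rfl⟩ := hψ
  rw [← coprod_comp_prod]
  exact isProjMap_comp _ _

theorem comp_left {φ : M →ₗ[A] N} (hφ : IsProjMap A φ) (ψ : N →ₗ[A] L) :
    IsProjMap A (ψ ∘ₗ φ) := by
  obtain ⟨P, hP, g, h, rfl⟩ := hφ
  exact ⟨P, hP, g, ψ ∘ₗ h, rfl⟩

theorem comp_right {φ : M →ₗ[A] N} (hφ : IsProjMap A φ) (ψ : L →ₗ[A] M) :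
    IsProjMap A (φ ∘ₗ ψ) := by
  obtain ⟨P, hP, g, h, rfl⟩ := hφ
  exact ⟨P, hP, g ∘ₗ ψ, h, rfl⟩

theorem neg {φ : M →ₗ[A] N} (hφ : IsProjMap A φ) : IsProjMap A (-φ) := by
  simpa using hφ.comp_left (-LinearMap.id)

theorem exists_eq_comp_pi [Module.Finite A N] {φ : M →ₗ[A] N} (hφ : IsProjMap A φ) :
    ∃ (n : ℕ) (g : M →ₗ[A] (Fin n → A)) (h : (Fin n → A) →ₗ[A] N), φ = h ∘ₗ g := by
  obtain ⟨P, hP, g, h, rfl⟩ := hφ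
  obtain ⟨n, π, hπ⟩ := Module.Finite.exists_fin' A N
  obtain ⟨h', hh'⟩ := Module.projective_lifting_property π h hπ
  exact ⟨n, h' ∘ₗ g, π, by rw [← hh', LinearMap.comp_assoc]⟩

theorem exists_eq_comp_of_surjective {φ : M →ₗ[A] N} (hφ : IsProjMap A φ) (f : L →ₗ[A] N)
    (hf : Function.Surjective f) : ∃ τ : M →ₗ[A] L, IsProjMap A τ ∧ φ = f ∘ₗ τ := by
  obtain ⟨P, hP, g, h, rfl⟩ := hφ
  obtain ⟨t, rfl⟩ := Module.projective_lifting_property f h hf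
  exact ⟨t ∘ₗ g, isProjMap_comp g t, rfl⟩

theorem exists_eq_comp_of_injective [Module.Injective A A] [Module.Finite A N]
    {φ : M →ₗ[A] N} (hφ : IsProjMap A φ) (f : M →ₗ[A] L) (hf : Function.Injective f) :
    ∃ τ : L →ₗ[A] N, IsProjMap A τ ∧ φ = τ ∘ₗ f := by
  obtain ⟨n, g, h, rfl⟩ := hφ.exists_eq_comp_pi
  obtain ⟨t, rfl⟩ := Module.Injective.extension_property A _ _ _ f hf g
  exact ⟨h ∘ₗ t, isProjMap_comp t h, rfl⟩

end IsProjMap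

theorem Module.Projective.of_isProjMap_id (h : IsProjMap A (LinearMap.id : M →ₗ[A] M)) :
    Module.Projective A M := by
  obtain ⟨P, hP, g, h, hid⟩ := h
  exact Module.Projective.of_split g h hid.symm

theorem Module.Injective.of_retract [Module.Injective A N] (i : M →ₗ[A] N) (r : N →ₗ[A] M)
    (hri : r ∘ₗ i = LinearMap.id) : Module.Injective A M :=
  ⟨fun _ _ _ _ _ _ f hf g => by
    obtain ⟨h, hh⟩ := Module.Injective.out f hf (i ∘ₗ g)
    exact ⟨r ∘ₗ h, fun x => by simp [hh, ← LinearMap.comp_apply r i, hri]⟩⟩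

theorem Module.Injective.of_projective_of_finite [Module.Injective A A] [Module.Finite A M]
    [Module.Projective A M] : Module.Injective A M := by
  obtain ⟨n, π, hπ⟩ := Module.Finite.exists_fin' A M
  obtain ⟨s, hs⟩ := Module.projective_lifting_property π LinearMap.id hπ
  exact .of_retract s π hs

end ProjectiveMaps

theorem IsNilpotent.not_isUnit_mul_right {R : Type*} [Ring R] [Nontrivial R] {a : R}
    (ha : IsNilpotent a) (b : R) : ¬IsUnit (a * b) := by
  rintro ⟨u, hu⟩
  obtain ⟨n, hn⟩ := ha
  have hinv : a * (b * ↑u⁻¹) = 1 := by rw [← mul_assoc, ← hu, Units.mul_inv]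
  simpa [hn] using pow_mul_pow_eq_one n hinv

theorem IsNilpotent.not_isUnit_mul_left {R : Type*} [Ring R] [Nontrivial R] {a : R}
    (ha : IsNilpotent a) (b : R) : ¬IsUnit (b * a) := by
  rintro ⟨u, hu⟩
  obtain ⟨n, hn⟩ := ha
  have hinv : ↑u⁻¹ * b * a = 1 := by rw [mul_assoc, ← hu, Units.inv_mul]
  simpa [hn] using pow_mul_pow_eq_one n hinv

theorem exists_of_forall_exists_lt {α β : Type*} [Preorder α] [WellFoundedLT α] {P Q : β → Prop}
    (μ : β → α) (step : ∀ x, P x → ¬Q x → ∃ y, P y ∧ μ y < μ x) {x : β} (hx : P x) :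
    ∃ y, P y ∧ Q y := by
  obtain ⟨y, hy, hmin⟩ := (InvImage.wf μ wellFounded_lt).has_min {y | P y} ⟨x, hx⟩
  by_contra! hQ
  obtain ⟨z, hz, hlt⟩ := step y hy (hQ y hy)
  exact hmin z hz hlt

theorem Submodule.compress_comp_projectionOnto {R M : Type*} [Ring R] [AddCommGroup M]
    [Module R M] {K J : Submodule R M} (hKJ : IsCompl K J) {σ : Module.End R M}
    (hJ : ∀ x ∈ J, σ x ∈ J) :
    (K.projectionOnto J hKJ ∘ₗ σ ∘ₗ K.subtype) ∘ₗ K.projectionOnto J hKJ =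
      K.projectionOnto J hKJ ∘ₗ σ := by
  refine LinearMap.ext fun x => ?_
  have hx : σ (x - K.projection J hKJ x) ∈ J := hJ _ (sub_projection_mem hKJ x)
  have hqσ : K.projectionOnto J hKJ (σ x) =
      K.projectionOnto J hKJ (σ (K.projection J hKJ x)) := by
    rw [← sub_eq_zero, ← map_sub, ← map_sub]
    exact projectionOnto_apply_of_mem_right hKJ hx
  exact hqσ.symm

theorem Submodule.projectionOnto_comp_comp_subtype {R M : Type*} [Ring R] [AddCommGroup M]
    [Module R M] {K J : Submodule R M} (hKJ : IsCompl K J) {σ : Module.End R M}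
    (hK : ∀ x ∈ K, σ x ∈ K) : K.projectionOnto J hKJ ∘ₗ σ ∘ₗ K.subtype = σ.restrict hK :=
  LinearMap.ext fun x => projectionOnto_apply_of_mem_left hKJ (hK x x.2)

namespace Module.End

variable {R M : Type*} [Ring R] [AddCommGroup M] [Module R M] (σ : Module.End R M)

def fittingKer : Submodule R M := ⨆ n, ker (σ ^ n)

def fittingImage : Submodule R M := ⨅ n, range (σ ^ n)

theorem apply_mem_fittingKer : ∀ x ∈ σ.fittingKer, σ x ∈ σ.fittingKer := fun x hx =>
  (show σ.fittingKer ≤ σ.fittingKer.comap σ from iSup_le fun n y hy => by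
    refine le_iSup (fun n => ker (σ ^ n)) n ?_
    rw [mem_ker, ← Module.End.mul_apply, ← pow_succ, pow_succ', Module.End.mul_apply,
      mem_ker.mp hy, map_zero]) hx

theorem le_fittingImage_of_map_eq {J : Submodule R M} (hJ : J.map σ = J) :
    J ≤ σ.fittingImage := by
  refine le_iInf fun n => ?_
  have hJn : J.map (σ ^ n) = J := by
    induction n with
    | zero => simp [Module.End.one_eq_id]
    | succ n ih => rw [pow_succ', Module.End.mul_eq_comp, map_comp, ih, hJ]
  exact hJn ▸ map_le_range

theorem fittingKer_le_of_comap_le {J : Submodule R M} (hJ : J.comap σ ≤ J) :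
    σ.fittingKer ≤ J := by
  refine iSup_le fun n => ?_
  induction n with
  | zero => simp [Module.End.one_eq_id]
  | succ n ih =>
    rw [pow_succ, Module.End.mul_eq_comp, ker_comp]
    exact (comap_mono ih).trans hJ

section FiniteLength

variable [IsNoetherian R M] [IsArtinian R M]

theorem isCompl_fittingKer_fittingImage : IsCompl σ.fittingKer σ.fittingImage :=
  σ.isCompl_iSup_ker_pow_iInf_range_pow

theorem eventually_fittingKer_fittingImage_eq :
    ∀ᶠ n in Filter.atTop, σ.fittingKer = ker (σ ^ n) ∧ σ.fittingImage = range (σ ^ n) :=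
  σ.eventually_iSup_ker_pow_eq.and σ.eventually_iInf_range_pow_eq

theorem comap_fittingKer : σ.fittingKer.comap σ = σ.fittingKer := by
  refine le_antisymm (fun x hx => ?_) σ.apply_mem_fittingKer
  obtain ⟨n, hn, -⟩ := σ.eventually_fittingKer_fittingImage_eq.exists
  refine le_iSup (fun n => ker (σ ^ n)) (n + 1) ?_
  rw [mem_comap, hn, mem_ker] at hx
  rwa [mem_ker, pow_succ, Module.End.mul_apply]

theorem map_fittingImage : σ.fittingImage.map σ = σ.fittingImage := by
  obtain ⟨n, hn⟩ := Filter.eventually_atTop.mp σ.eventually_fittingKer_fittingImage_eq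
  rw [(hn n le_rfl).2, ← range_comp, ← Module.End.mul_eq_comp, ← pow_succ',
    ← (hn (n + 1) n.le_succ).2, (hn n le_rfl).2]

theorem isNilpotent_restrict_of_le_fittingKer {K : Submodule R M} (hK : ∀ x ∈ K, σ x ∈ K)
    (hKσ : K ≤ σ.fittingKer) : IsNilpotent (σ.restrict hK) := by
  obtain ⟨n, hn, -⟩ := σ.eventually_fittingKer_fittingImage_eq.exists
  refine ⟨n, LinearMap.ext fun x => Subtype.ext ?_⟩
  rw [Module.End.pow_restrict, coe_restrict_apply]
  exact mem_ker.mp (hn ▸ hKσ x.2)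

theorem isNilpotent_compress_of_fittingImage_le {K J : Submodule R M} (hKJ : IsCompl K J)
    (hJ : ∀ x ∈ J, σ x ∈ J) (hσJ : σ.fittingImage ≤ J) :
    IsNilpotent (K.projectionOnto J hKJ ∘ₗ σ ∘ₗ K.subtype) := by
  set q := K.projectionOnto J hKJ
  set u := q ∘ₗ σ ∘ₗ K.subtype
  obtain ⟨n, -, hn⟩ := σ.eventually_fittingKer_fittingImage_eq.exists
  have hqσn : q ∘ₗ σ ^ n = 0 :=
    range_le_ker_iff.mp (by rw [ker_projectionOnto, ← hn]; exact hσJ)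
  refine ⟨n, ?_⟩
  calc u ^ n = (u ^ n) ∘ₗ q ∘ₗ K.subtype := by
        rw [projectionOnto_comp_subtype hKJ, LinearMap.comp_id]
    _ = (q ∘ₗ σ ^ n) ∘ₗ K.subtype := by
        rw [← LinearMap.comp_assoc,
          Module.End.commute_pow_left_of_commute (compress_comp_projectionOnto hKJ hJ)]
    _ = 0 := by rw [hqσn, LinearMap.zero_comp]

end FiniteLength

theorem bijective_of_fittingKer_eq_bot [IsArtinian R M] (h : σ.fittingKer = ⊥) :
    Function.Bijective σ := by
  refine IsArtinian.bijective_of_injective_endomorphism σ (ker_eq_bot.mp (eq_bot_iff.mpr ?_))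
  exact h ▸ le_iSup_of_le 1 (by rw [pow_one])

end Module.End

section Modification

variable {A : Type} [Ring A] {M N K : Type} [AddCommGroup M] [Module A M]
  [AddCommGroup N] [Module A N] [AddCommGroup K] [Module A K]

theorem exists_comp_add_mul_eq_one_of_surjective [Module.Projective A K] {q : M →ₗ[A] K}
    (hq : Function.Surjective q) {σ : Module.End A M} {a : Module.End A K}
    (hqσ : q ∘ₗ σ = a ∘ₗ q)
    {f : M →ₗ[A] N} (hf : Function.Surjective (f ∘ₗ σ)) :
    ∃ (s : K →ₗ[A] M) (r : Module.End A K), q ∘ₗ s + a * r = 1 ∧ f ∘ₗ s = 0 := by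
  have hΨ : Function.Surjective ((q ∘ₗ (ker f).subtype).coprod a) := by
    intro x
    obtain ⟨y, rfl⟩ := hq x
    obtain ⟨m, hm⟩ := hf (f y)
    refine ⟨(⟨y - σ m, by simp [← hm]⟩, q m), ?_⟩
    simp [← LinearMap.comp_apply a q, ← hqσ]
  obtain ⟨χ, hχ⟩ := Module.projective_lifting_property _ LinearMap.id hΨ
  refine ⟨(ker f).subtype ∘ₗ LinearMap.fst A _ _ ∘ₗ χ, LinearMap.snd A _ _ ∘ₗ χ, ?_, ?_⟩
  · refine LinearMap.ext fun x => ?_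
    simpa using LinearMap.congr_fun hχ x
  · ext x
    exact (χ x).1.2

theorem exists_comp_add_mul_eq_one_of_injective [Module.Injective A K] {i : K →ₗ[A] M}
    (hi : Function.Injective i) {σ : Module.End A M} {a : Module.End A K}
    (hσi : σ ∘ₗ i = i ∘ₗ a)
    {f : N →ₗ[A] M} (hf : Function.Injective (σ ∘ₗ f)) :
    ∃ (w : M →ₗ[A] K) (r : Module.End A K), w ∘ₗ i + r * a = 1 ∧ w ∘ₗ f = 0 := by
  have hθ : Function.Injective (((range f).mkQ ∘ₗ i).prod a) := by
    rw [← ker_eq_bot, eq_bot_iff]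
    intro x hx
    simp only [mem_ker, LinearMap.prod_apply, Function.prod_apply, Prod.mk_eq_zero, comp_apply,
      mkQ_apply, Quotient.mk_eq_zero] at hx
    obtain ⟨⟨n, hn⟩, hax⟩ := hx
    have : σ (f n) = 0 := by rw [hn, ← LinearMap.comp_apply σ i, hσi, comp_apply, hax, map_zero]
    rw [mem_bot, ← hi.eq_iff, ← hn, hf (this.trans (map_zero (σ ∘ₗ f)).symm), map_zero, map_zero]
  obtain ⟨ρ, hρ⟩ := Module.Injective.extension_property A _ _ _ _ hθ LinearMap.id
  refine ⟨ρ ∘ₗ LinearMap.inl A _ _ ∘ₗ (range f).mkQ, ρ ∘ₗ LinearMap.inr A _ _, ?_, ?_⟩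
  · refine LinearMap.ext fun x => ?_
    have hx := LinearMap.congr_fun hρ x
    simp only [comp_apply, LinearMap.prod_apply, Function.prod_apply, id_apply] at hx
    rw [LinearMap.add_apply, Module.End.mul_apply, Module.End.one_apply, comp_apply, comp_apply,
      comp_apply, comp_apply, ← map_add, inl_apply, inr_apply, Prod.mk_add_mk, add_zero, zero_add]
    exact hx
  · rw [LinearMap.comp_assoc, LinearMap.comp_assoc, range_mkQ_comp, comp_zero, comp_zero]

end Modification

section FittingSteps

variable {A : Type} [Ring A] {M N : Type} [AddCommGroup M] [Module A M]
  [AddCommGroup N] [Module A N] [IsNoetherian A M] [IsArtinian A M]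

theorem Module.End.projective_fittingKer {σ : Module.End A M}
    (hσ : IsProjMap A (σ - LinearMap.id)) : Module.Projective A σ.fittingKer := by
  set K := σ.fittingKer
  set q := K.projectionOnto _ σ.isCompl_fittingKer_fittingImage
  set a := σ.restrict σ.apply_mem_fittingKer
  obtain ⟨v, hv⟩ :=
    (σ.isNilpotent_restrict_of_le_fittingKer σ.apply_mem_fittingKer le_rfl).isUnit_sub_one
  have hqσ : q ∘ₗ (σ - LinearMap.id) ∘ₗ K.subtype = a - 1 := by
    rw [sub_comp, comp_sub, projectionOnto_comp_comp_subtype, LinearMap.id_comp,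
      projectionOnto_comp_subtype, Module.End.one_eq_id]
  refine .of_isProjMap_id ?_
  have hid : (LinearMap.id : K →ₗ[A] K) = ↑v⁻¹ ∘ₗ q ∘ₗ (σ - LinearMap.id) ∘ₗ K.subtype := by
    rw [hqσ, ← hv, ← Module.End.mul_eq_comp, Units.inv_mul, Module.End.one_eq_id]
  rw [hid]
  exact (hσ.comp_right _).comp_left _ |>.comp_left _

theorem exists_lt_fittingImage_of_surjective (f : M →ₗ[A] N) {σ : Module.End A M}
    (hf : Function.Surjective (f ∘ₗ σ)) (hσ : IsProjMap A (σ - LinearMap.id))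
    (hbij : ¬Function.Bijective σ) :
    ∃ σ' : Module.End A M, f ∘ₗ σ' = f ∘ₗ σ ∧ IsProjMap A (σ' - LinearMap.id) ∧
      σ.fittingImage < σ'.fittingImage := by
  set K := σ.fittingKer
  set I := σ.fittingImage
  have hKI : IsCompl K I := σ.isCompl_fittingKer_fittingImage
  set q := K.projectionOnto I hKI
  set a := σ.restrict σ.apply_mem_fittingKer
  have ha : IsNilpotent a := σ.isNilpotent_restrict_of_le_fittingKer _ le_rfl
  have : Nontrivial K := nontrivial_iff_ne_bot.mpr (mt σ.bijective_of_fittingKer_eq_bot hbij)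
  have : Module.Projective A K := σ.projective_fittingKer hσ
  have hσI : I.map σ = I := σ.map_fittingImage
  have hI : ∀ x ∈ I, σ x ∈ I := fun x hx => hσI ▸ mem_map_of_mem hx
  have hqσ : q ∘ₗ σ = a ∘ₗ q := by
    rw [← compress_comp_projectionOnto hKI hI, projectionOnto_comp_comp_subtype]
  obtain ⟨s, r, hsr, hfs⟩ := exists_comp_add_mul_eq_one_of_surjective
    (projectionOnto_surjective hKI) hqσ hf
  set σ' := σ + s ∘ₗ q
  have hσ'I : σ' ∘ₗ I.subtype = σ ∘ₗ I.subtype := by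
    refine LinearMap.ext fun x => ?_
    simp [σ', q, projectionOnto_apply_right]
  have hmap : I.map σ' = I := by
    rw [← range_subtype I, ← range_comp, hσ'I, range_comp, range_subtype, hσI]
  refine ⟨σ', ?_, ?_, lt_of_le_of_ne (σ'.le_fittingImage_of_map_eq hmap) fun h => ?_⟩
  · rw [comp_add, ← LinearMap.comp_assoc, hfs, LinearMap.zero_comp, add_zero]
  · rw [add_sub_right_comm]
    exact hσ.add (isProjMap_comp q s)
  have hnil := σ'.isNilpotent_compress_of_fittingImage_le hKI
    (fun x hx => hmap ▸ mem_map_of_mem hx) h.ge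
  have hcompress : q ∘ₗ σ' ∘ₗ K.subtype = 1 - a * (r - 1) := by
    rw [add_comp, comp_add, projectionOnto_comp_comp_subtype hKI σ.apply_mem_fittingKer,
      LinearMap.comp_assoc _ q s, projectionOnto_comp_subtype, LinearMap.comp_id,
      eq_sub_of_add_eq hsr]
    change a + (1 - a * r) = 1 - a * (r - 1)
    rw [mul_sub, mul_one]
    abel
  rw [hcompress] at hnil
  exact ha.not_isUnit_mul_right (r - 1) (by simpa using hnil.isUnit_one_sub)

theorem exists_fittingKer_lt_of_injective [Module.Injective A A] (f : N →ₗ[A] M)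
    {σ : Module.End A M} (hf : Function.Injective (σ ∘ₗ f))
    (hσ : IsProjMap A (σ - LinearMap.id)) (hbij : ¬Function.Bijective σ) :
    ∃ σ' : Module.End A M, σ' ∘ₗ f = σ ∘ₗ f ∧ IsProjMap A (σ' - LinearMap.id) ∧
      σ'.fittingKer < σ.fittingKer := by
  set K := σ.fittingKer
  set a := σ.restrict σ.apply_mem_fittingKer
  have ha : IsNilpotent a := σ.isNilpotent_restrict_of_le_fittingKer _ le_rfl
  have : Nontrivial K := nontrivial_iff_ne_bot.mpr (mt σ.bijective_of_fittingKer_eq_bot hbij)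
  have : Module.Projective A K := σ.projective_fittingKer hσ
  have : Module.Injective A K := .of_projective_of_finite
  obtain ⟨w, r, hwr, hwf⟩ := exists_comp_add_mul_eq_one_of_injective K.injective_subtype
    (subtype_comp_restrict _).symm hf
  set σ' := σ + K.subtype ∘ₗ w
  have hK : ∀ x ∈ K, σ' x ∈ K := fun x hx => add_mem (σ.apply_mem_fittingKer x hx) (w x).2
  have hcomap : K.comap σ' ≤ K := fun x hx => by
    have hσx : σ' x - w x ∈ K := sub_mem (mem_comap.mp hx) (w x).2
    simp only [σ', LinearMap.add_apply, comp_apply, subtype_apply, add_sub_cancel_right] at hσx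
    exact σ.comap_fittingKer.le hσx
  refine ⟨σ', ?_, ?_, lt_of_le_of_ne (σ'.fittingKer_le_of_comap_le hcomap) fun h => ?_⟩
  · rw [add_comp, LinearMap.comp_assoc, hwf, comp_zero, add_zero]
  · rw [add_sub_right_comm]
    exact hσ.add (isProjMap_comp w K.subtype)
  have hnil := σ'.isNilpotent_restrict_of_le_fittingKer hK h.ge
  have hrestrict : σ'.restrict hK = 1 - (r - 1) * a := by
    have hσ' : σ'.restrict hK = a + w ∘ₗ K.subtype := LinearMap.ext fun x => rfl
    rw [hσ', eq_sub_of_add_eq hwr, sub_mul, one_mul]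
    abel
  rw [hrestrict] at hnil
  exact ha.not_isUnit_mul_left (r - 1) (by simpa using hnil.isUnit_one_sub)

theorem exists_bijective_of_surjective_comp (f : M →ₗ[A] N) {σ : Module.End A M}
    (hf : Function.Surjective (f ∘ₗ σ)) (hσ : IsProjMap A (σ - LinearMap.id)) :
    ∃ σ' : Module.End A M, Function.Bijective σ' ∧ f ∘ₗ σ' = f ∘ₗ σ ∧
      IsProjMap A (σ' - LinearMap.id) := by
  obtain ⟨σ', ⟨hσ'f, hσ'⟩, hbij⟩ := exists_of_forall_exists_lt
    (P := fun σ' : Module.End A M => f ∘ₗ σ' = f ∘ₗ σ ∧ IsProjMap A (σ' - LinearMap.id))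
    (Q := fun σ' => Function.Bijective σ') (fun σ' => OrderDual.toDual σ'.fittingImage)
    (fun σ' ⟨hσ'f, hσ'⟩ hbij => by
      obtain ⟨σ'', hσ''f, hσ'', hlt⟩ :=
        exists_lt_fittingImage_of_surjective f (hσ'f ▸ hf) hσ' hbij
      exact ⟨σ'', ⟨hσ''f.trans hσ'f, hσ''⟩, hlt⟩)
    ⟨rfl, hσ⟩
  exact ⟨σ', hbij, hσ'f, hσ'⟩

theorem exists_bijective_of_injective_comp [Module.Injective A A] (f : N →ₗ[A] M)
    {σ : Module.End A M} (hf : Function.Injective (σ ∘ₗ f))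
    (hσ : IsProjMap A (σ - LinearMap.id)) :
    ∃ σ' : Module.End A M, Function.Bijective σ' ∧ σ' ∘ₗ f = σ ∘ₗ f ∧
      IsProjMap A (σ' - LinearMap.id) := by
  obtain ⟨σ', ⟨hσ'f, hσ'⟩, hbij⟩ := exists_of_forall_exists_lt
    (P := fun σ' : Module.End A M => σ' ∘ₗ f = σ ∘ₗ f ∧ IsProjMap A (σ' - LinearMap.id))
    (Q := fun σ' => Function.Bijective σ') (fun σ' => σ'.fittingKer)
    (fun σ' ⟨hσ'f, hσ'⟩ hbij => by
      obtain ⟨σ'', hσ''f, hσ'', hlt⟩ :=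
        exists_fittingKer_lt_of_injective f (hσ'f ▸ hf) hσ' hbij
      exact ⟨σ'', ⟨hσ''f.trans hσ'f, hσ''⟩, hlt⟩)
    ⟨rfl, hσ⟩
  exact ⟨σ', hbij, hσ'f, hσ'⟩

end FittingSteps

theorem stmt_6_general (k A : Type) [Field k] [Ring A] [Algebra k A] [FiniteDimensional k A]
    [Module.Injective A A]
    (M N : Type) [AddCommGroup M] [Module A M] [Module.Finite A M]
    [AddCommGroup N] [Module A N] :
    (∀ f f' : M →ₗ[A] N, Function.Surjective f → Function.Surjective f' →
      IsProjMap A (f - f') →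
      ∃ σ : M ≃ₗ[A] M, f' = f.comp σ.toLinearMap ∧
        IsProjMap A (σ.toLinearMap - LinearMap.id)) ∧
    (∀ f f' : N →ₗ[A] M, Function.Injective f → Function.Injective f' →
      IsProjMap A (f - f') →
      ∃ σ : M ≃ₗ[A] M, f' = σ.toLinearMap.comp f ∧
        IsProjMap A (σ.toLinearMap - LinearMap.id)) := by
  have : IsArtinianRing A := IsArtinianRing.of_finite k A
  have : IsNoetherianRing A := isNoetherian_of_tower k inferInstance
  refine ⟨fun f f' hf hf' hff' => ?_, fun f f' hf hf' hff' => ?_⟩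
  · obtain ⟨τ, hτ, hfτ⟩ := hff'.exists_eq_comp_of_surjective f hf
    have hσ₀ : f ∘ₗ (LinearMap.id - τ) = f' := by rw [comp_sub, comp_id, ← hfτ, sub_sub_cancel]
    obtain ⟨σ, hbij, hσf, hσ⟩ :=
      exists_bijective_of_surjective_comp f (hσ₀ ▸ hf') (by simpa using hτ.neg)
    exact ⟨.ofBijective σ hbij, (hσf.trans hσ₀).symm, hσ⟩
  · obtain ⟨τ, hτ, hfτ⟩ := hff'.exists_eq_comp_of_injective f hf
    have hσ₀ : (LinearMap.id - τ) ∘ₗ f = f' := by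
      rw [sub_comp, LinearMap.id_comp, ← hfτ, sub_sub_cancel]
    obtain ⟨σ, hbij, hσf, hσ⟩ :=
      exists_bijective_of_injective_comp f (hσ₀ ▸ hf') (by simpa using hτ.neg)
    exact ⟨.ofBijective σ hbij, (hσf.trans hσ₀).symm, hσ⟩

/-- Lemma `stableker`.  Over a split self-injective finite dimensional
algebra with no projective simple module, two stably equal surjections (resp. injections)
differ by an automorphism which is stably the identity. -/
theorem stmt_6 (k A : Type) [Field k] [Ring A] [Algebra k A] [FiniteDimensional k A]
    [Module.Injective A A] (hsplit : IsSplitAlgebra k A) (hnps : NoProjectiveSimple A)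
    (M N : Type) [AddCommGroup M] [Module A M] [Module.Finite A M]
    [AddCommGroup N] [Module A N] [Module.Finite A N] :
    (∀ f f' : M →ₗ[A] N, Function.Surjective f → Function.Surjective f' →
      IsProjMap A (f - f') →
      ∃ σ : M ≃ₗ[A] M, f' = f.comp σ.toLinearMap ∧
        IsProjMap A (σ.toLinearMap - LinearMap.id)) ∧
    (∀ f f' : N →ₗ[A] M, Function.Injective f → Function.Injective f' →
      IsProjMap A (f - f') →
      ∃ σ : M ≃ₗ[A] M, f' = σ.toLinearMap.comp f ∧
        IsProjMap A (σ.toLinearMap - LinearMap.id)) :=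
  stmt_6_general k A M N
end
end

section
/- Let M be a non-projective filtrable A-module. Then there exists S ∈ 𝒮 such that some homomorphism M → S is non-projective (i.e., Hom_{A-stab}(M,S) ≠ 0), and there exists S ∈ 𝒮 such that some homomorphism S → M is non-projective (i.e., Hom_{A-stab}(S,M) ≠ 0). -/
noncomputable section

/-!
Projective maps form an ideal: they are closed under sums and under composition with arbitrary
maps. If every map `M → S`, `S ∈ 𝒮`, is projective, then so is every map from `M`
into `add 𝒮`, and going up the filtration `0 = M_r ⊆ ⋯ ⊆ M_0 = M` one shows that every map
`M → M_i` is projective: a map whose composite with `M_i → M_i/M_{i+1}` factors through a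
projective `P` differs, by a lift `P → M_i`, from a map into `M_{i+1}`. For `i = 0` the identity
of `M` is projective, so `M` is projective.

Dually, a map `M_i → M` whose restriction to `M_{i+1}` is projective differs from one vanishing on
`M_{i+1}` by a map through a projective module, provided the factorisation of the restriction can
be extended to `M_i`. Since `M_{i+1}` is finitely generated it factors through a finite free
module, which is injective because `A` is self-injective.
-/

section ProjectiveMaps

variable {A : Type} [Ring A]
variable {M N L : Type} [AddCommGroup M] [Module A M] [AddCommGroup N] [Module A N]
  [AddCommGroup L] [Module A L]

lemma isProjMap_comp_of_projective {P : Type} [AddCommGroup P] [Module A P]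
    [Module.Projective A P] (h : P →ₗ[A] N) (g : M →ₗ[A] P) : IsProjMap A (h ∘ₗ g) :=
  ⟨ModuleCat.of A P, ‹_›, g, h, rfl⟩

lemma isProjMap_zero : IsProjMap A (0 : M →ₗ[A] N) := by
  simpa using isProjMap_comp_of_projective (0 : A →ₗ[A] N) 0

lemma isProjMap_of_subsingleton_left [Subsingleton M] (f : M →ₗ[A] N) : IsProjMap A f := by
  rw [Subsingleton.elim f 0]
  exact isProjMap_zero

lemma isProjMap_of_subsingleton_right [Subsingleton N] (f : M →ₗ[A] N) : IsProjMap A f := by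
  rw [Subsingleton.elim f 0]
  exact isProjMap_zero

lemma isProjMap_id_iff : IsProjMap A (LinearMap.id : M →ₗ[A] M) ↔ Module.Projective A M :=
  ⟨fun ⟨_, _, g, h, hgh⟩ => Module.Projective.of_split g h hgh.symm,
    fun _ => isProjMap_comp_of_projective LinearMap.id LinearMap.id⟩

namespace IsProjMap

lemma postcomp {f : M →ₗ[A] N} (hf : IsProjMap A f) (g : N →ₗ[A] L) :
    IsProjMap A (g ∘ₗ f) := by
  obtain ⟨P, hP, u, v, rfl⟩ := hf
  exact ⟨P, hP, u, g ∘ₗ v, rfl⟩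

lemma precomp {f : M →ₗ[A] N} (hf : IsProjMap A f) (g : L →ₗ[A] M) :
    IsProjMap A (f ∘ₗ g) := by
  obtain ⟨P, hP, u, v, rfl⟩ := hf
  exact ⟨P, hP, u ∘ₗ g, v, rfl⟩

lemma of_linearEquiv_comp {f : M →ₗ[A] N} (e : N ≃ₗ[A] L)
    (hf : IsProjMap A (e.toLinearMap ∘ₗ f)) : IsProjMap A f := by
  simpa [← LinearMap.comp_assoc] using hf.postcomp e.symm.toLinearMap

lemma of_comp_linearEquiv {f : M →ₗ[A] N} (e : L ≃ₗ[A] M)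
    (hf : IsProjMap A (f ∘ₗ e.toLinearMap)) : IsProjMap A f := by
  simpa [LinearMap.comp_assoc] using hf.precomp e.symm.toLinearMap

lemma add_s6 {f g : M →ₗ[A] N} (hf : IsProjMap A f) (hg : IsProjMap A g) :
    IsProjMap A (f + g) := by
  obtain ⟨P, hP, u, v, rfl⟩ := hf
  obtain ⟨Q, hQ, u', v', rfl⟩ := hg
  exact isProjMap_comp_of_projective (P := P × Q) (v.coprod v') (u.prod u')

end IsProjMap

lemma isProjMap_sum {κ : Type} (s : Finset κ) (f : κ → M →ₗ[A] N)
    (hf : ∀ j ∈ s, IsProjMap A (f j)) : IsProjMap A (∑ j ∈ s, f j) :=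
  Finset.sum_induction f (IsProjMap A) (fun _ _ => IsProjMap.add_s6) isProjMap_zero hf

end ProjectiveMaps

section FiniteProducts

variable {A : Type} [Ring A] {M : Type} [AddCommGroup M] [Module A M]
variable {κ : Type} [Fintype κ] [DecidableEq κ] {V : κ → Type} [∀ j, AddCommGroup (V j)]
  [∀ j, Module A (V j)]

lemma isProjMap_to_pi (f : M →ₗ[A] ((j : κ) → V j))
    (hf : ∀ j, IsProjMap A (LinearMap.proj j ∘ₗ f)) : IsProjMap A f := by
  have hsum : f = ∑ j, LinearMap.single A V j ∘ₗ (LinearMap.proj j ∘ₗ f) := by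
    ext x
    simp
  rw [hsum]
  exact isProjMap_sum _ _ fun j _ => (hf j).postcomp _

lemma isProjMap_from_pi (f : ((j : κ) → V j) →ₗ[A] M)
    (hf : ∀ j, IsProjMap A (f ∘ₗ LinearMap.single A V j)) : IsProjMap A f := by
  rw [← (LinearMap.lsum A V ℕ).apply_symm_apply f]
  exact isProjMap_sum _ _ fun j _ => (hf j).precomp _

end FiniteProducts

section AddS

variable {A : Type} [Ring A] {M X : Type} [AddCommGroup M] [Module A M] [AddCommGroup X]
  [Module A X]
variable {ι : Type} {S : ι → Type} [∀ i, AddCommGroup (S i)] [∀ i, Module A (S i)]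

lemma InAddS.isProjMap_to (hX : InAddS A S X) (hS : ∀ i (g : M →ₗ[A] S i), IsProjMap A g)
    (f : M →ₗ[A] X) : IsProjMap A f := by
  obtain ⟨n, c, ⟨e⟩⟩ := hX
  exact IsProjMap.of_linearEquiv_comp e (isProjMap_to_pi _ fun j => hS _ _)

lemma InAddS.isProjMap_from (hX : InAddS A S X) (hS : ∀ i (g : S i →ₗ[A] M), IsProjMap A g)
    (f : X →ₗ[A] M) : IsProjMap A f := by
  obtain ⟨n, c, ⟨e⟩⟩ := hX
  exact IsProjMap.of_comp_linearEquiv e.symm (isProjMap_from_pi _ fun j => hS _ _)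

end AddS

section Factorisation

variable {A : Type} [Ring A] {M N : Type} [AddCommGroup M] [Module A M] [AddCommGroup N]
  [Module A N]

lemma IsProjMap.exists_eq_comp_pi_s6 [Module.Finite A M] {f : M →ₗ[A] N} (hf : IsProjMap A f) :
    ∃ (κ : Type) (_ : Fintype κ) (g : M →ₗ[A] (κ → A)) (h : (κ → A) →ₗ[A] N), f = h ∘ₗ g := by
  classical
  obtain ⟨P, hP, u, v, rfl⟩ := hf
  obtain ⟨s, hs⟩ := Module.projective_def.mp hP
  obtain ⟨t, ht⟩ := Module.Finite.fg_top (R := A) (M := M)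
  set T : Finset P := t.biUnion fun x => (s (u x)).support
  have hsupp : ∀ x, s (u x) ∈ Finsupp.supported A A (T : Set P) := by
    suffices ⊤ ≤ (Finsupp.supported A A (T : Set P)).comap (s ∘ₗ u) from fun x => this trivial
    rw [← ht, Submodule.span_le]
    intro x hx p hp
    exact Finset.mem_biUnion.mpr ⟨x, hx, hp⟩
  refine ⟨T, inferInstance, LinearMap.pi fun p => Finsupp.lapply (p : P) ∘ₗ s ∘ₗ u,
    v ∘ₗ Fintype.linearCombination A (fun p : T => (p : P)), LinearMap.ext fun x => ?_⟩
  have hx := hs (u x)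
  rw [Finsupp.linearCombination_apply_of_mem_supported A (hsupp x)] at hx
  rw [LinearMap.comp_apply, ← hx]
  simp [Fintype.linearCombination_apply, ← Finset.sum_coe_sort T]

end Factorisation

section Extensions

variable {A : Type} [Ring A] {M X : Type} [AddCommGroup M] [Module A M] [AddCommGroup X]
  [Module A X]

lemma isProjMap_of_isProjMap_mkQ_comp (N : Submodule A X) (f : M →ₗ[A] X)
    (hN : ∀ g : M →ₗ[A] N, IsProjMap A g) (hf : IsProjMap A (N.mkQ ∘ₗ f)) :
    IsProjMap A f := by
  obtain ⟨P, hP, u, v, huv⟩ := hf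
  obtain ⟨v', hv'⟩ := Module.projective_lifting_property N.mkQ v N.mkQ_surjective
  have hker : ∀ x, (f - v' ∘ₗ u) x ∈ N := fun x => by
    simpa [← Submodule.Quotient.mk_eq_zero, sub_eq_zero] using
      (LinearMap.congr_fun huv x).trans (LinearMap.congr_fun hv' (u x)).symm
  have hsplit : f = N.subtype ∘ₗ (f - v' ∘ₗ u).codRestrict N hker + v' ∘ₗ u := by
    ext x
    simp
  rw [hsplit]
  exact ((hN _).postcomp _).add_s6 ⟨P, hP, u, v', rfl⟩

lemma isProjMap_of_isProjMap_comp_subtype [Module.Injective A A] (N : Submodule A X)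
    [Module.Finite A N] (f : X →ₗ[A] M) (hN : ∀ g : X ⧸ N →ₗ[A] M, IsProjMap A g)
    (hf : IsProjMap A (f ∘ₗ N.subtype)) : IsProjMap A f := by
  obtain ⟨κ, _, u, v, huv⟩ := hf.exists_eq_comp_pi_s6
  obtain ⟨u', hu'⟩ :=
    Module.Injective.extension_property A _ _ _ N.subtype N.injective_subtype u
  have hker : N ≤ LinearMap.ker (f - v ∘ₗ u') := fun x hx => by
    simpa [sub_eq_zero] using
      (LinearMap.congr_fun huv ⟨x, hx⟩).trans (congrArg v (LinearMap.congr_fun hu' ⟨x, hx⟩)).symm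
  have hsplit : f = N.liftQ (f - v ∘ₗ u') hker ∘ₗ N.mkQ + v ∘ₗ u' := by
    rw [N.liftQ_mkQ, sub_add_cancel]
  rw [hsplit]
  exact ((hN _).precomp _).add_s6 (isProjMap_comp_of_projective v u')

end Extensions

section Filtrations

variable {A : Type} [Ring A] {M X : Type} [AddCommGroup M] [Module A M] [AddCommGroup X]
  [Module A X]
variable {ι : Type} {S : ι → Type} [∀ i, AddCommGroup (S i)] [∀ i, Module A (S i)]

lemma IsFiltrable.submodule_induction (hX : IsFiltrable A S X) (p : Submodule A X → Prop)
    (bot : p ⊥) (step : ∀ N N' : Submodule A X, N ≤ N' →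
      InAddS A S (N' ⧸ N.comap N'.subtype) → p N → p N') : p ⊤ := by
  obtain ⟨r, F, hF0, hFr, hmono, hquot⟩ := hX
  suffices ∀ i (hi : i ≤ r), p (F i) from hF0 ▸ this 0 r.zero_le
  intro i hi
  induction hi using Nat.decreasingInduction with
  | self => exact hFr ▸ bot
  | of_succ i hi ih => exact step _ _ (hmono i) (hquot i hi) ih

lemma IsFiltrable.isProjMap_to (hX : IsFiltrable A S X)
    (hS : ∀ i (g : M →ₗ[A] S i), IsProjMap A g) (f : M →ₗ[A] X) : IsProjMap A f := by
  refine IsProjMap.of_linearEquiv_comp Submodule.topEquiv.symm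
    (hX.submodule_induction (fun N => ∀ g : M →ₗ[A] N, IsProjMap A g)
      isProjMap_of_subsingleton_right ?_ _)
  intro N N' hle hquot hN g
  let e := Submodule.comapSubtypeEquivOfLe hle
  exact isProjMap_of_isProjMap_mkQ_comp _ g
    (fun _ => IsProjMap.of_linearEquiv_comp e (hN _)) (hquot.isProjMap_to hS _)

lemma IsFiltrable.isProjMap_from [Module.Injective A A] [IsNoetherian A X]
    (hX : IsFiltrable A S X) (hS : ∀ i (g : S i →ₗ[A] M), IsProjMap A g) (f : X →ₗ[A] M) :
    IsProjMap A f := by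
  refine IsProjMap.of_comp_linearEquiv Submodule.topEquiv
    (hX.submodule_induction (fun N => ∀ g : N →ₗ[A] M, IsProjMap A g)
      isProjMap_of_subsingleton_left ?_ _)
  intro N N' hle hquot hN g
  let e := Submodule.comapSubtypeEquivOfLe hle
  exact isProjMap_of_isProjMap_comp_subtype _ g (hquot.isProjMap_from hS)
    (IsProjMap.of_comp_linearEquiv e.symm (hN _))

end Filtrations

theorem stmt_7_general (k A : Type) [Field k] [Ring A] [Algebra k A] [FiniteDimensional k A]
    [Module.Injective A A]
    {ι : Type} (S : ι → Type) [∀ i, AddCommGroup (S i)] [∀ i, Module A (S i)]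
    (M : Type) [AddCommGroup M] [Module A M] [Module.Finite A M]
    (hMfilt : IsFiltrable A S M) (hMnonproj : ¬ Module.Projective A M) :
    (∃ i, ∃ f : M →ₗ[A] S i, ¬ IsProjMap A f) ∧
    (∃ i, ∃ f : S i →ₗ[A] M, ¬ IsProjMap A f) := by
  have : IsNoetherianRing A := isNoetherian_of_tower k inferInstance
  constructor
  · by_contra! h
    exact hMnonproj (isProjMap_id_iff.mp (hMfilt.isProjMap_to h LinearMap.id))
  · by_contra! h
    exact hMnonproj (isProjMap_id_iff.mp (hMfilt.isProjMap_from h LinearMap.id))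

/-- **Statement 7** (Lemma `nonzeromap`). A non-projective filtrable module admits a
non-projective map to some `S ∈ 𝒮` and a non-projective map from some `S ∈ 𝒮`. -/
theorem stmt_7 (k A : Type) [Field k] [Ring A] [Algebra k A] [FiniteDimensional k A]
    [Module.Injective A A] (hsplit : IsSplitAlgebra k A) (hnps : NoProjectiveSimple A)
    {ι : Type} [Fintype ι] (S : ι → Type) [∀ i, AddCommGroup (S i)] [∀ i, Module A (S i)]
    (hS : SGood k A S)
    (M : Type) [AddCommGroup M] [Module A M] [Module.Finite A M]
    (hMfilt : IsFiltrable A S M) (hMnonproj : ¬ Module.Projective A M) :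
    (∃ i, ∃ f : M →ₗ[A] S i, ¬ IsProjMap A f) ∧
    (∃ i, ∃ f : S i →ₗ[A] M, ¬ IsProjMap A f) :=
  stmt_7_general k A S M hMfilt hMnonproj
end
end
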